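/- Let N̄ = ℕ ∪ {∞} with topology generated by singletons {n} and the semi-lines [n,∞]. If A ⊆ N̄ is Markov-semidecidable and ∞ ∈ A, then there exists a computable order h : ℕ → ℕ (nondecreasing, unbounded, computable) such that {x ∈ ℕ : K(x) < h(x)} ⊆ A, where K(x) is the Kolmogorov complexity of the natural number x. -/

import Mathlib

/-- The standard enumeration of partial computable functions. -/
noncomputable def phi (e : ℕ) : ℕ →. ℕ := (Denumerable.ofNat Nat.Partrec.Code e).eval

/-- The e-th computably enumerable set. -/
def W (e : ℕ) : Set ℕ := (phi e).Dom

/-- Codes of the basic neighborhoods of a point of `N̄ = ℕ ∪ {∞}`: `2n` codes the singleton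
`{n}` and `2m+1` codes the semi-line `[m,∞]`. -/
def nbhdCodes (x : ℕ∞) : Set ℕ :=
  {i | (∃ n : ℕ, i = 2 * n ∧ x = (n : ℕ∞)) ∨ (∃ m : ℕ, i = 2 * m + 1 ∧ (m : ℕ∞) ≤ x)}

/-- `e` is a Markov-name of `x ∈ N̄`: `W_e` is the set of codes of basic neighborhoods of `x`. -/
def isName (e : ℕ) (x : ℕ∞) : Prop := W e = nbhdCodes x

/-- `A ⊆ N̄` is Markov-semidecidable: membership is semidecidable from any Markov-name. -/
def MarkovSemidecN (A : Set ℕ∞) : Prop :=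
  ∃ I : Set ℕ, REPred (· ∈ I) ∧ ∀ e x, isName e x → (x ∈ A ↔ e ∈ I)

/-- Plain Kolmogorov complexity of a natural number. -/
noncomputable def Knat (n : ℕ) : ℕ := sInf (Nat.size '' {e | phi e 0 = Part.some n})

/-- A computable order: a nondecreasing unbounded computable function. -/
def ComputableOrder (h : ℕ → ℕ) : Prop :=
  Computable h ∧ Monotone h ∧ ∀ m, ∃ n, m ≤ h n

/-!
Fix a semidecider for `A` acting on names. By the recursion theorem each program `p` gets a
name `e_p` that knows its own index: `e_p` enumerates the neighbourhoods of `∞`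
until the semidecider accepts `e_p`, at some stage `s_p`; from then on, if `p` outputs some
`x ≥ s_p`, it enumerates the neighbourhoods of `x` (the semi-lines `[m, ∞]` with `m < s_p`
already listed are neighbourhoods of `x` as well). If `e_p` were never accepted it would name
`∞ ∈ A`, so `s_p` exists, and then every output `x ≥ s_p` of `p` lies in `A`.
The order `h x = max {k ≤ x | s_p ≤ x for all p < 2 ^ k}` is primitive recursive, and
`K(x) < h(x)` provides a program `p < 2 ^ h(x)` for `x`, whence `s_p ≤ x` and `x ∈ A`.
-/

open Nat.Partrec (Code)
open Nat.Partrec.Code Denumerable Encodable Filter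

def haltsWithin (c : Code) (n s : ℕ) : Bool := (evaln s c n).isSome

theorem primrec₂_haltsWithin (c : Code) : Primrec₂ (haltsWithin c) :=
  Primrec.option_isSome.comp
    (primrec_evaln.comp ((Primrec.snd.pair (Primrec.const c)).pair Primrec.fst))

theorem monotone_haltsWithin (c : Code) (n : ℕ) : Monotone (haltsWithin c n) := by
  intro s s' hss'
  unfold haltsWithin
  cases h : evaln s c n with
  | none => exact Bool.false_le _
  | some x =>
    have h' : evaln s' c n = some x := evaln_mono hss' h
    simp [h']

theorem eval_dom_iff_exists_haltsWithin {c : Code} {n : ℕ} :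
    (eval c n).Dom ↔ ∃ s, haltsWithin c n s = true := by
  simp only [haltsWithin, Option.isSome_iff_exists, Part.dom_iff_mem, evaln_complete]
  exact exists_comm

theorem REPred.exists_code {p : ℕ → Prop} (hp : REPred p) :
    ∃ c : Code, ∀ n, p n ↔ (eval c n).Dom := by
  obtain ⟨c, hc⟩ := Nat.Partrec.Code.exists_code.1 <| Partrec.nat_iff.1 <|
    hp.map ((Computable.const 0).comp Computable.fst).to₂
  exact ⟨c, fun n => by simp [hc, Part.assert]⟩

theorem mem_nbhdCodes {i : ℕ} {x : ℕ∞} :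
    i ∈ nbhdCodes x ↔ i % 2 = 1 ∧ ((i / 2 : ℕ) : ℕ∞) ≤ x ∨ i % 2 = 0 ∧ x = (i / 2 : ℕ) := by
  constructor
  · rintro (⟨n, rfl, rfl⟩ | ⟨m, rfl, hm⟩)
    · right; constructor <;> simp [Nat.mul_mod_right]
    · left; exact ⟨by omega, by rwa [show (2 * m + 1) / 2 = m by omega]⟩
  · rintro (⟨hi, hx⟩ | ⟨hi, hx⟩)
    · exact Or.inr ⟨i / 2, by omega, hx⟩
    · exact Or.inl ⟨i / 2, by omega, hx⟩

/-- The codes enumerated by the name attached to a program with output `y`, where `acc s`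
tells whether that name has been accepted within `s` steps. -/
def nameCodes (acc : ℕ → Bool) (y : Part ℕ) : Set ℕ :=
  {i | i % 2 = 1 ∧ (acc (i / 2) = false ∨ ∃ x ∈ y, i / 2 ≤ x) ∨
    i % 2 = 0 ∧ i / 2 ∈ y ∧ acc (i / 2) = true}

theorem nameCodes_of_forall_eq_false {acc : ℕ → Bool} (h : ∀ s, acc s = false) (y : Part ℕ) :
    nameCodes acc y = nbhdCodes ⊤ := by
  ext i
  simp [nameCodes, mem_nbhdCodes, h]

theorem nameCodes_of_mem {acc : ℕ → Bool} (hacc : Monotone acc) {y : Part ℕ} {x : ℕ}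
    (hx : x ∈ y) (hax : acc x = true) : nameCodes acc y = nbhdCodes x := by
  have hy : ∀ z, z ∈ y ↔ z = x := fun z => ⟨fun hz => Part.mem_unique hz hx, fun h => h ▸ hx⟩
  have hlate : ∀ m, acc m = false → m ≤ x := fun m hm =>
    not_lt.1 fun hxm => by simpa [hm] using hacc hxm.le hax
  ext i
  simp only [nameCodes, mem_nbhdCodes, hy, exists_eq_left, Nat.cast_le,
    Nat.cast_inj]
  constructor
  · rintro (⟨hi, hm | hm⟩ | ⟨hi, rfl, -⟩)
    exacts [Or.inl ⟨hi, hlate _ hm⟩, Or.inl ⟨hi, hm⟩, Or.inr ⟨hi, rfl⟩]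
  · rintro (⟨hi, hm⟩ | ⟨hi, rfl⟩)
    exacts [Or.inl ⟨hi, Or.inr hm⟩, Or.inr ⟨hi, rfl, hax⟩]

def nameStage (c₀ : Code) (e p i k : ℕ) : Bool :=
  if i % 2 = 1 then
    !haltsWithin c₀ e (i / 2) || (evaln k (ofNat Code p) 0).elim false (i / 2 ≤ ·)
  else
    decide (evaln k (ofNat Code p) 0 = some (i / 2)) && haltsWithin c₀ e (i / 2)

theorem exists_nameStage_eq_true_iff {c₀ : Code} {e p i : ℕ} :
    (∃ k, nameStage c₀ e p i k = true) ↔ i ∈ nameCodes (haltsWithin c₀ e) (phi p 0) := by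
  rcases Nat.mod_two_eq_zero_or_one i with hi | hi
  · simp [nameStage, nameCodes, hi, phi, evaln_complete]
  · simp only [nameStage, hi, ↓reduceIte, Bool.or_eq_true, Bool.not_eq_eq_eq_not, Bool.not_true,
      nameCodes, phi, evaln_complete, Option.mem_def, Set.mem_ofPred_eq, true_and, one_ne_zero,
      false_and, or_false]
    constructor
    · rintro ⟨k, h | h⟩
      · exact Or.inl h
      · cases ho : evaln k (ofNat Code p) 0 <;> simp [ho] at h
        exact Or.inr ⟨_, ⟨k, ho⟩, h⟩
    · rintro (h | ⟨x, ⟨k, hk⟩, hx⟩)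
      · exact ⟨0, Or.inl h⟩
      · exact ⟨k, Or.inr (by simp [hk, hx])⟩

theorem primrec_nameStage (c₀ : Code) {α : Type*} [Primcodable α] {e p i k : α → ℕ}
    (he : Primrec e) (hp : Primrec p) (hi : Primrec i) (hk : Primrec k) :
    Primrec fun a => nameStage c₀ (e a) (p a) (i a) (k a) := by
  have hm : Primrec fun a => i a / 2 := Primrec.nat_div.comp hi (Primrec.const 2)
  have hacc : Primrec fun a => haltsWithin c₀ (e a) (i a / 2) :=
    (primrec₂_haltsWithin c₀).comp he hm
  have hout : Primrec fun a => evaln (k a) (ofNat Code (p a)) 0 :=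
    primrec_evaln.comp ((hk.pair ((Primrec.ofNat Code).comp hp)).pair (Primrec.const 0))
  refine Primrec.ite (Primrec.eq.comp (Primrec.nat_mod.comp hi (Primrec.const 2))
    (Primrec.const 1)) (Primrec.or.comp (Primrec.not.comp hacc) ?_)
    (Primrec.and.comp (Primrec.eq.comp hout (Primrec.option_some.comp hm)).decide hacc)
  refine (Primrec.option_casesOn hout (Primrec.const false)
    (Primrec.nat_le.comp (hm.comp Primrec.fst) Primrec.snd).decide.to₂).of_eq fun a => ?_
  cases evaln (k a) (ofNat Code (p a)) 0 <;> rfl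

theorem exists_primrec_names (c₀ : Code) : ∃ name : ℕ → ℕ, Primrec name ∧
    ∀ p, W (name p) = nameCodes (haltsWithin c₀ (name p)) (phi p 0) := by
  let F : Code → ℕ →. ℕ := fun c n => Nat.rfind fun k =>
    nameStage c₀ (encode (c.curry n.unpair.1)) n.unpair.1 n.unpair.2 k
  have hF : Partrec₂ F := by
    have hn : Primrec fun a : (Code × ℕ) × ℕ => a.1.2.unpair :=
      Primrec.unpair.comp (Primrec.snd.comp Primrec.fst)
    have hstage : Primrec₂ fun (c : Code × ℕ) (k : ℕ) =>
        nameStage c₀ (encode (c.1.curry c.2.unpair.1)) c.2.unpair.1 c.2.unpair.2 k :=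
      primrec_nameStage c₀ (Primrec.encode.comp
          (primrec₂_curry.comp (Primrec.fst.comp Primrec.fst) (Primrec.fst.comp hn)))
        (Primrec.fst.comp hn) (Primrec.snd.comp hn) Primrec.snd
    exact Partrec.rfind hstage.to_comp.partrec₂
  obtain ⟨cs, hcs⟩ := fixed_point₂ hF
  refine ⟨fun p => encode (cs.curry p),
    Primrec.encode.comp (primrec₂_curry.comp (Primrec.const cs) Primrec.id), fun p => ?_⟩
  ext i
  have hphi : phi (encode (cs.curry p)) i = F cs (Nat.pair p i) := by
    rw [phi, ofNat_encode, eval_curry, hcs]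
  change (phi _ i).Dom ↔ _
  rw [hphi, ← exists_nameStage_eq_true_iff]
  refine Nat.rfind_dom.trans ?_
  simp

theorem MarkovSemidecN.exists_primrec_acceptance {A : Set ℕ∞} (hA : MarkovSemidecN A)
    (hinf : (⊤ : ℕ∞) ∈ A) :
    ∃ acc : ℕ → ℕ → Bool, Primrec₂ acc ∧ (∀ p, Monotone (acc p)) ∧ (∀ p, ∃ s, acc p s = true) ∧
      ∀ p x, x ∈ phi p 0 → acc p x = true → (x : ℕ∞) ∈ A := by
  obtain ⟨I, hI, hAI⟩ := hA
  obtain ⟨c₀, hc₀⟩ := hI.exists_code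
  obtain ⟨name, hname, hW⟩ := exists_primrec_names c₀
  have hmem : ∀ p x, isName (name p) x → (x ∈ A ↔ ∃ s, haltsWithin c₀ (name p) s = true) :=
    fun p x hx => (hAI _ _ hx).trans ((hc₀ _).trans eval_dom_iff_exists_haltsWithin)
  refine ⟨fun p s => haltsWithin c₀ (name p) s,
    (primrec₂_haltsWithin c₀).comp (hname.comp Primrec.fst) Primrec.snd,
    fun p => monotone_haltsWithin c₀ (name p), fun p => ?_, fun p x hx hax => ?_⟩
  · by_contra! hnever
    simp only [ne_eq, Bool.not_eq_true] at hnever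
    obtain ⟨s, hs⟩ := (hmem p ⊤ ((hW p).trans (nameCodes_of_forall_eq_false hnever _))).1 hinf
    simp [hnever s] at hs
  · exact (hmem p x ((hW p).trans (nameCodes_of_mem (monotone_haltsWithin c₀ (name p)) hx hax))).2
      ⟨x, hax⟩

theorem exists_computableOrder_forall_size_lt {acc : ℕ → ℕ → Bool} (hacc : Primrec₂ acc)
    (hmono : ∀ p, Monotone (acc p)) (hev : ∀ p, ∃ s, acc p s = true) :
    ∃ h : ℕ → ℕ, ComputableOrder h ∧ ∀ x p, Nat.size p < h x → acc p x = true := by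
  let P : ℕ → ℕ → Prop := fun x k => ∀ p < 2 ^ k, acc p x = true
  refine ⟨fun x => Nat.findGreatest (P x) x, ⟨?_, ?_, fun m => ?_⟩, fun x p hp => ?_⟩
  · have hpow : Primrec₂ fun a b : ℕ => a ^ b := Primrec₂.unpaired'.mp Nat.Primrec.pow
    have hP : PrimrecRel P :=
      (PrimrecRel.forall_lt (Primrec.eq.comp₂ hacc (Primrec₂.const true))).comp₂
        (hpow.comp (Primrec.const 2) Primrec.snd).to₂ Primrec.fst.to₂
    exact (Primrec.nat_findGreatest Primrec.id hP).to_comp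
  · exact fun x y hxy => Nat.findGreatest_mono (fun _ hk p hp => hmono p hxy (hk p hp)) hxy
  · have hev' : ∀ p, ∀ᶠ x in atTop, acc p x = true := fun p =>
      let ⟨s, hs⟩ := hev p
      eventually_atTop.2 ⟨s, fun x hx => hmono p hx hs⟩
    obtain ⟨x, hmx, hPx⟩ := ((eventually_ge_atTop m).and
      ((eventually_all_finite (Set.finite_lt_nat (2 ^ m))).2 fun p _ => hev' p)).exists
    exact ⟨x, Nat.le_findGreatest hmx hPx⟩
  · have hP := Nat.findGreatest_of_ne_zero rfl (Nat.ne_zero_of_lt hp)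
    exact hP p (Nat.size_le.1 hp.le)

theorem exists_size_lt_of_Knat_lt {x n : ℕ} (h : Knat x < n) :
    ∃ p, x ∈ phi p 0 ∧ Nat.size p < n := by
  have hne : {p | phi p 0 = Part.some x}.Nonempty :=
    ⟨encode (Code.const x), by simp [phi, eval_const]⟩
  obtain ⟨p, hp, hpK⟩ := Nat.sInf_mem (hne.image Nat.size)
  exact ⟨p, (hp : phi p 0 = _) ▸ Part.mem_some x, hpK ▸ h⟩

/-- If `A ⊆ N̄` is Markov-semidecidable and `∞ ∈ A`, then `A` contains a Friedberg set
`{x ∈ ℕ : K(x) < h(x)}` for some computable order `h`. -/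
theorem stmt9 (A : Set ℕ∞) (hA : MarkovSemidecN A) (hinf : (⊤ : ℕ∞) ∈ A) :
    ∃ h : ℕ → ℕ, ComputableOrder h ∧ ∀ x : ℕ, Knat x < h x → (x : ℕ∞) ∈ A := by
  obtain ⟨acc, hacc, hmono, hev, haccA⟩ := hA.exists_primrec_acceptance hinf
  obtain ⟨h, hh, hsize⟩ := exists_computableOrder_forall_size_lt hacc hmono hev
  refine ⟨h, hh, fun x hx => ?_⟩
  obtain ⟨p, hp, hps⟩ := exists_size_lt_of_Knat_lt hx
  exact haccA p x hp (hsize x p hps)
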